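/- arXiv:1304.7048 — 2 statements merged into one kernel-verified Lean document; each statement's English description precedes it below -/
import Mathlib

section
/- The Myerson payments of the Uniform Price Auction respect budgets: for each player i, the payment π_i = v_i·x_i(v_i, v_{−i}) − ∫_0^{v_i} x_i(u, v_{−i}) du satisfies π_i ≤ B_i. In particular, for players i ≤ k the allocation x_i is constant for all values above the market clearing price p, so π_i ≤ p·x_i = B_i, and in Case II player k+1 pays at most v_{k+1}·x_{k+1} < B_{k+1}. -/
/-!
A winner, one of the `k` highest-ranked players, receives `B_i / p`, where `p` is the clearing
price. Raising a winner's value to any `u > p` leaves every player ranked below position `k` in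
place, since their values are at most `v_{k+1} ≤ p`; hence it changes neither `k`, nor
`∑_{j ≤ k} B_j`, nor `p`, and the allocation stays `B_i / p` on `(p, v_i]`. As allocations are
nonnegative, the Myerson integral is at least `(v_i - p) B_i / p`, so the payment is at most
`p · B_i / p = B_i`. The marginal player `k+1` of Case II pays at most
`v_{k+1} x_{k+1} = v_{k+1} - ∑_{j ≤ k} B_j`, which is `< B_{k+1}` by maximality of `k`, and losers
receive nothing. The integral is a genuine one because the allocation is measurable in `u`: the
ranking, hence `k`, is determined by finitely many comparisons of coordinates.
-/

open Finset

/-- Permutation sorting the values in non-increasing order. -/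
noncomputable def sortPerm {n : ℕ} (v : Fin n → ℝ) : Equiv.Perm (Fin n) :=
  Tuple.sort (fun i => -v i)

/-- `j`-th highest value (0-indexed), `0` for `j ≥ n`. -/
noncomputable def sortedVal {n : ℕ} (v : Fin n → ℝ) (j : ℕ) : ℝ :=
  if h : j < n then v (sortPerm v ⟨j, h⟩) else 0

/-- Budget of the player with the `j`-th highest value (0-indexed). -/
noncomputable def sortedBud {n : ℕ} (v B : Fin n → ℝ) (j : ℕ) : ℝ :=
  if h : j < n then B (sortPerm v ⟨j, h⟩) else 0

open Classical in
/-- `kstar v B` is the maximum `k` such that the sum of the `k` largest-value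
players' budgets is at most the `k`-th highest value. -/
noncomputable def kstar {n : ℕ} (v B : Fin n → ℝ) : ℕ :=
  Nat.findGreatest
    (fun k => ∑ j ∈ range k, sortedBud v B j ≤ sortedVal v (k-1)) n

/-- Allocation of the Uniform Price Auction to the player of rank `j`
(0-indexed): Case I if `∑_{j≤k} B_j > v_{k+1}`, Case II otherwise. -/
noncomputable def allocSorted {n : ℕ} (v B : Fin n → ℝ) (j : ℕ) : ℝ :=
  let k := kstar v B
  let S := ∑ i ∈ range k, sortedBud v B i
  if sortedVal v k < S then
    (if j < k then sortedBud v B j / S else 0)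
  else if j < k then sortedBud v B j / sortedVal v k
  else if j = k then 1 - S / sortedVal v k
  else 0

/-- Allocation of the Uniform Price Auction to player `i`. -/
noncomputable def UPA {n : ℕ} (v B : Fin n → ℝ) (i : Fin n) : ℝ :=
  allocSorted v B (((sortPerm v).symm i : Fin n) : ℕ)

open MeasureTheory

/-- The order realized by `sortPerm`: `Tuple.sort` breaks ties between equal values by index. -/
def Outranks {n : ℕ} (w : Fin n → ℝ) (a b : Fin n) : Prop :=
  w b < w a ∨ (w a = w b ∧ a < b)

/-- 0-indexed: the paper's player `k+1` has `valueRank v i = kstar v B`. -/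
noncomputable def valueRank {n : ℕ} (v : Fin n → ℝ) (a : Fin n) : ℕ :=
  (sortPerm v).symm a

section Ranking

variable {n : ℕ} (v : Fin n → ℝ)

lemma sortPerm_symm_lt_iff (a b : Fin n) :
    (sortPerm v).symm a < (sortPerm v).symm b ↔ Outranks v a b := by
  have hmono : StrictMono ((sortPerm v).trans (Tuple.graphEquiv₁ fun t => -v t)) :=
    Tuple.eq_sort_iff'.mp rfl
  rw [← hmono.lt_iff_lt, Equiv.trans_apply, Equiv.trans_apply, Equiv.apply_symm_apply,
    Equiv.apply_symm_apply, Outranks]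
  change toLex (-v a, a) < toLex (-v b, b) ↔ _
  rw [Prod.Lex.toLex_lt_toLex, neg_lt_neg_iff, neg_inj]

lemma valueRank_lt (a : Fin n) : valueRank v a < n := ((sortPerm v).symm a).isLt

lemma sortPerm_valueRank (a : Fin n) : sortPerm v ⟨valueRank v a, valueRank_lt v a⟩ = a :=
  (sortPerm v).apply_symm_apply a

lemma valueRank_sortPerm (m : Fin n) : valueRank v (sortPerm v m) = m := by
  simp [valueRank]

lemma valueRank_injective : Function.Injective (valueRank v) := fun _ _ h =>
  (sortPerm v).symm.injective (Fin.ext h)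

lemma sortedVal_valueRank (a : Fin n) : sortedVal v (valueRank v a) = v a := by
  rw [sortedVal, dif_pos (valueRank_lt v a), sortPerm_valueRank]

lemma sortedBud_valueRank (B : Fin n → ℝ) (a : Fin n) :
    sortedBud v B (valueRank v a) = B a := by
  rw [sortedBud, dif_pos (valueRank_lt v a), sortPerm_valueRank]

lemma valueRank_lt_iff (a b : Fin n) : valueRank v a < valueRank v b ↔ Outranks v a b :=
  Fin.lt_def.symm.trans (sortPerm_symm_lt_iff v a b)

open Classical in
lemma valueRank_eq_card (b : Fin n) : valueRank v b = #{c | Outranks v c b} := by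
  have hfilter : ({c | Outranks v c b} : Finset (Fin n))
      = (Finset.Iio ((sortPerm v).symm b)).map (sortPerm v).toEmbedding := by
    ext c
    simp [← sortPerm_symm_lt_iff v c b]
  rw [hfilter, card_map, Fin.card_Iio, valueRank]

lemma sortedVal_antitone {a b : ℕ} (hab : a ≤ b) (hb : b < n) :
    sortedVal v b ≤ sortedVal v a := by
  have ha : a < n := hab.trans_lt hb
  have h := Tuple.monotone_sort (fun t => -v t) (a := ⟨a, ha⟩) (b := ⟨b, hb⟩) hab
  simp only [Function.comp_apply, neg_le_neg_iff] at h
  rwa [sortedVal, sortedVal, dif_pos ha, dif_pos hb]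

lemma sortedVal_nonneg (hv : ∀ a, 0 ≤ v a) (j : ℕ) : 0 ≤ sortedVal v j := by
  unfold sortedVal; split_ifs
  exacts [hv _, le_rfl]

lemma sortedBud_nonneg {B : Fin n → ℝ} (hB : ∀ a, 0 ≤ B a) (j : ℕ) : 0 ≤ sortedBud v B j := by
  unfold sortedBud; split_ifs
  exacts [hB _, le_rfl]

lemma sum_range_sortedBud (B : Fin n → ℝ) : ∑ t ∈ range n, sortedBud v B t = ∑ a, B a := by
  rw [Finset.sum_range]
  simp only [sortedBud, Fin.is_lt, dif_pos, Fin.eta]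
  exact Equiv.sum_comp (sortPerm v) B

end Ranking

lemma sum_range_eq_of_tail_eq {M : Type*} [AddCommGroup M] {f g : ℕ → M} {k m N : ℕ}
    (htot : ∑ t ∈ range N, f t = ∑ t ∈ range N, g t) (htail : ∀ t, k ≤ t → f t = g t)
    (hkm : k ≤ m) (hmN : m ≤ N) : ∑ t ∈ range m, f t = ∑ t ∈ range m, g t := by
  rw [← sum_range_add_sum_Ico f hmN, ← sum_range_add_sum_Ico g hmN,
    sum_congr rfl fun t ht => htail t (hkm.trans (mem_Ico.1 ht).1)] at htot
  exact add_right_cancel htot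

section RaiseWinner

open Function

variable {n : ℕ} {v : Fin n → ℝ} {i : Fin n} {k : ℕ} {u : ℝ}

lemma valueRank_update_of_outranks {b : Fin n} (hib : Outranks v i b) (hu : v b < u) :
    valueRank (update v i u) b = valueRank v b := by
  classical
  have hbi : b ≠ i := by rintro rfl; simp [Outranks] at hib
  rw [valueRank_eq_card, valueRank_eq_card]
  congr 1
  ext c
  by_cases hci : c = i
  · subst hci
    simp only [mem_filter, mem_univ, true_and, hib, iff_true]
    left
    simpa [update_of_ne hbi] using hu
  · simp only [mem_filter, mem_univ, true_and]
    simp only [Outranks, update_of_ne hci, update_of_ne hbi]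

variable (hi : valueRank v i < k) (hu : sortedVal v k < u)
include hi hu

lemma valueRank_update_of_le {b : Fin n} (hb : k ≤ valueRank v b) :
    valueRank (update v i u) b = valueRank v b := by
  refine valueRank_update_of_outranks ((valueRank_lt_iff v i b).1 (hi.trans_le hb)) ?_
  rw [← sortedVal_valueRank v b]
  exact (sortedVal_antitone v hb (valueRank_lt v b)).trans_lt hu

lemma le_valueRank_update_iff (b : Fin n) :
    k ≤ valueRank (update v i u) b ↔ k ≤ valueRank v b := by
  refine ⟨fun hb => ?_, fun hb => (valueRank_update_of_le hi hu hb).symm ▸ hb⟩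
  set b' := sortPerm v ⟨valueRank (update v i u) b, valueRank_lt _ b⟩
  have hb' : valueRank v b' = valueRank (update v i u) b := valueRank_sortPerm v _
  have : b' = b := valueRank_injective _ ((valueRank_update_of_le hi hu (hb' ▸ hb)).trans hb')
  rwa [← this, hb']

lemma sortPerm_update_of_le {m : ℕ} (hm : m < n) (hkm : k ≤ m) :
    sortPerm (update v i u) ⟨m, hm⟩ = sortPerm v ⟨m, hm⟩ := by
  set b := sortPerm (update v i u) ⟨m, hm⟩
  have hbw : valueRank (update v i u) b = m := valueRank_sortPerm _ _
  have hbv : valueRank v b = m :=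
    (valueRank_update_of_le hi hu ((le_valueRank_update_iff hi hu b).1 (hbw ▸ hkm))).symm.trans hbw
  rw [← sortPerm_valueRank v b]
  simp only [hbv]

lemma sortedVal_update_of_le {m : ℕ} (hkm : k ≤ m) :
    sortedVal (update v i u) m = sortedVal v m := by
  unfold sortedVal
  split_ifs with hm
  · rw [sortPerm_update_of_le hi hu hm hkm, update_of_ne]
    rintro hi'
    have : valueRank v i = m := hi' ▸ valueRank_sortPerm v ⟨m, hm⟩
    omega
  · rfl

lemma sortedBud_update_of_le (B : Fin n → ℝ) {m : ℕ} (hkm : k ≤ m) :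
    sortedBud (update v i u) B m = sortedBud v B m := by
  unfold sortedBud
  split_ifs with hm
  · rw [sortPerm_update_of_le hi hu hm hkm]
  · rfl

lemma sum_range_sortedBud_update_of_le (B : Fin n → ℝ) {m : ℕ} (hkm : k ≤ m) (hmn : m ≤ n) :
    ∑ t ∈ range m, sortedBud (update v i u) B t = ∑ t ∈ range m, sortedBud v B t :=
  sum_range_eq_of_tail_eq (by rw [sum_range_sortedBud, sum_range_sortedBud])
    (fun _ ht => sortedBud_update_of_le hi hu B ht) hkm hmn

lemma valueRank_update_self_lt : valueRank (update v i u) i < k := by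
  by_contra! h
  exact (le_valueRank_update_iff hi hu i).1 h |>.not_gt hi

end RaiseWinner

/-- `allocSorted` as a function of its data: the number `k` of winners, the rank `j`, that
player's budget `b`, the winners' budget `S` and the value `p` of rank `k`. -/
noncomputable def clearingAlloc (k j : ℕ) (b S p : ℝ) : ℝ :=
  if p < S then (if j < k then b / S else 0)
  else if j < k then b / p else if j = k then 1 - S / p else 0

section ClearingAlloc

variable {k j : ℕ} {b S p : ℝ}

lemma clearingAlloc_of_lt (h : j < k) : clearingAlloc k j b S p = b / max S p := by
  unfold clearingAlloc
  split_ifs with hpS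
  · rw [max_eq_left hpS.le]
  · rw [max_eq_right (not_lt.1 hpS)]

lemma clearingAlloc_mem_Icc (hb : 0 ≤ b) (hS : 0 ≤ S) (hbS : j < k → b ≤ S) :
    clearingAlloc k j b S p ∈ Set.Icc 0 1 := by
  unfold clearingAlloc
  split_ifs with hpS hjk hjk
  · exact ⟨div_nonneg hb hS, div_le_one_of_le₀ (hbS hjk) hS⟩
  · exact ⟨le_rfl, zero_le_one⟩
  · have hp : 0 ≤ p := hS.trans (not_lt.1 hpS)
    exact ⟨div_nonneg hb hp, div_le_one_of_le₀ ((hbS hjk).trans (not_lt.1 hpS)) hp⟩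
  · have hp : 0 ≤ p := hS.trans (not_lt.1 hpS)
    exact ⟨sub_nonneg.2 (div_le_one_of_le₀ (not_lt.1 hpS) hp),
      sub_le_self _ (div_nonneg hS hp)⟩
  · exact ⟨le_rfl, zero_le_one⟩

end ClearingAlloc

section Clearing

variable {n : ℕ} (v B : Fin n → ℝ)

/-- `∑_{j ≤ k} B_j` in the paper's 1-indexed notation. -/
noncomputable def winnersBudget : ℝ :=
  ∑ t ∈ range (kstar v B), sortedBud v B t

/-- The price `p` at which the market clears: `∑_{j ≤ k} B_j` in Case I, `v_{k+1}` in Case II. -/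
noncomputable def clearingPrice : ℝ :=
  max (winnersBudget v B) (sortedVal v (kstar v B))

lemma kstar_le : kstar v B ≤ n :=
  Nat.findGreatest_le n

lemma winnersBudget_le_sortedVal (hv : ∀ a, 0 ≤ v a) :
    winnersBudget v B ≤ sortedVal v (kstar v B - 1) :=
  Nat.findGreatest_spec (P := fun k => ∑ j ∈ range k, sortedBud v B j ≤ sortedVal v (k - 1))
    (Nat.zero_le n) (by simpa using sortedVal_nonneg v hv 0)

lemma sortedVal_lt_sum_of_kstar_lt {m : ℕ} (hkm : kstar v B < m) (hmn : m ≤ n) :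
    sortedVal v (m - 1) < ∑ t ∈ range m, sortedBud v B t :=
  not_le.1 (Nat.findGreatest_is_greatest hkm hmn)

lemma sortedBud_le_winnersBudget {B : Fin n → ℝ} (hB : ∀ a, 0 ≤ B a) {j : ℕ}
    (hj : j < kstar v B) : sortedBud v B j ≤ winnersBudget v B :=
  single_le_sum (fun t _ => sortedBud_nonneg v hB t) (mem_range.2 hj)

lemma UPA_eq_clearingAlloc (i : Fin n) :
    UPA v B i = clearingAlloc (kstar v B) (valueRank v i) (B i) (winnersBudget v B)
      (sortedVal v (kstar v B)) := by
  rw [← sortedBud_valueRank v B i]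
  rfl

lemma UPA_mem_Icc {B : Fin n → ℝ} (hB : ∀ a, 0 ≤ B a) (i : Fin n) : UPA v B i ∈ Set.Icc 0 1 := by
  rw [UPA_eq_clearingAlloc]
  refine clearingAlloc_mem_Icc (hB i) (sum_nonneg fun t _ => sortedBud_nonneg v hB t) fun h => ?_
  rw [← sortedBud_valueRank v B i]
  exact sortedBud_le_winnersBudget v hB h

variable {v B} {i : Fin n}

lemma UPA_eq_div_clearingPrice (hi : valueRank v i < kstar v B) :
    UPA v B i = B i / clearingPrice v B := by
  rw [UPA_eq_clearingAlloc, clearingAlloc_of_lt hi, clearingPrice]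

lemma clearingPrice_pos (hB : ∀ a, 0 < B a) (hi : valueRank v i < kstar v B) :
    0 < clearingPrice v B := by
  have hbud := sortedBud_le_winnersBudget v (fun a => (hB a).le) hi
  rw [sortedBud_valueRank] at hbud
  exact (hB i).trans_le (hbud.trans (le_max_left _ _))

lemma clearingPrice_le (hv : ∀ a, 0 ≤ v a) (hi : valueRank v i < kstar v B) :
    clearingPrice v B ≤ v i := by
  have hkn := kstar_le v B
  rw [← sortedVal_valueRank v i]
  refine max_le ((winnersBudget_le_sortedVal v B hv).trans
    (sortedVal_antitone v (by omega) (by omega))) ?_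
  by_cases hk : kstar v B < n
  · exact sortedVal_antitone v hi.le hk
  · rw [sortedVal, dif_neg hk]
    exact sortedVal_nonneg v hv _

lemma mul_UPA_le_of_kstar_le (hv : ∀ a, 0 < v a) (hB : ∀ a, 0 < B a)
    (hi : kstar v B ≤ valueRank v i) : v i * UPA v B i ≤ B i := by
  rw [UPA_eq_clearingAlloc]
  unfold clearingAlloc
  simp only [not_lt.2 hi, if_false]
  split_ifs with hpS hik
  · simpa using (hB i).le
  · have hkn : kstar v B < n := hik ▸ valueRank_lt v i
    have hvk : sortedVal v (kstar v B) = v i := hik ▸ sortedVal_valueRank v i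
    have hmax := sortedVal_lt_sum_of_kstar_lt v B (Nat.lt_add_one _) hkn
    rw [Nat.add_sub_cancel, sum_range_succ, ← hik, sortedBud_valueRank, sortedVal_valueRank] at hmax
    rw [hvk, mul_sub, mul_one, mul_div_cancel₀ _ (hv i).ne']
    rw [winnersBudget, ← hik]
    linarith
  · simpa using (hB i).le

end Clearing

section RaiseWinnerAboveClearingPrice

open Function

variable {n : ℕ} {v B : Fin n → ℝ} {i : Fin n} {u : ℝ}

lemma winnersBudget_le_sortedVal_update (hv : ∀ a, 0 ≤ v a) (hi : valueRank v i < kstar v B)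
    (hu : clearingPrice v B < u) :
    winnersBudget v B ≤ sortedVal (update v i u) (kstar v B - 1) := by
  set k := kstar v B
  have hku : sortedVal v k < u := (le_max_right _ _).trans_lt hu
  have hk1 : k - 1 < n := by have := kstar_le v B; omega
  rw [sortedVal, dif_pos hk1]
  set c := sortPerm (update v i u) ⟨k - 1, hk1⟩
  have hcw : valueRank (update v i u) c = k - 1 := valueRank_sortPerm _ _
  have hcv : valueRank v c < k := not_le.1 fun h => by
    have := (le_valueRank_update_iff hi hku c).2 h
    omega
  by_cases hci : c = i
  · rw [hci, update_self]
    exact (le_max_left _ _).trans hu.le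
  · rw [update_of_ne hci, ← sortedVal_valueRank v c]
    exact (winnersBudget_le_sortedVal v B hv).trans
      (sortedVal_antitone v (by omega) (by omega))

lemma kstar_update_eq (hv : ∀ a, 0 ≤ v a) (hi : valueRank v i < kstar v B)
    (hu : clearingPrice v B < u) : kstar (update v i u) B = kstar v B := by
  set k := kstar v B with hk
  have hku : sortedVal v k < u := (le_max_right _ _).trans_lt hu
  have hkn : k ≤ n := kstar_le v B
  conv_lhs => unfold kstar
  rw [Nat.findGreatest_eq_iff]
  refine ⟨hkn, fun _ => ?_, fun m hkm hmn => ?_⟩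
  · rw [sum_range_sortedBud_update_of_le hi hku B le_rfl hkn]
    exact winnersBudget_le_sortedVal_update hv hi hu
  · rw [sum_range_sortedBud_update_of_le hi hku B hkm.le hmn,
      sortedVal_update_of_le hi hku (by omega : k ≤ m - 1)]
    exact (sortedVal_lt_sum_of_kstar_lt v B hkm hmn).not_ge

lemma UPA_update_eq_of_clearingPrice_lt (hv : ∀ a, 0 ≤ v a) (hi : valueRank v i < kstar v B)
    (hu : clearingPrice v B < u) : UPA (update v i u) B i = UPA v B i := by
  have hku : sortedVal v (kstar v B) < u := (le_max_right _ _).trans_lt hu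
  have hk := kstar_update_eq hv hi hu
  have hiw : valueRank (update v i u) i < kstar (update v i u) B :=
    hk ▸ valueRank_update_self_lt hi hku
  rw [UPA_eq_div_clearingPrice hiw, UPA_eq_div_clearingPrice hi, clearingPrice, clearingPrice,
    winnersBudget, winnersBudget, hk, sortedVal_update_of_le hi hku le_rfl,
    sum_range_sortedBud_update_of_le hi hku B le_rfl (kstar_le v B)]

end RaiseWinnerAboveClearingPrice

theorem Measurable.countable_piecewise {α ι β : Type*} [MeasurableSpace α] [MeasurableSpace β]
    [MeasurableSpace ι] [Countable ι] [MeasurableSingletonClass ι] {g : α → ι}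
    (hg : Measurable g) {f : ι → α → β} (hf : ∀ i, Measurable (f i)) :
    Measurable fun x => f (g x) x :=
  (measurable_from_prod_countable_left (f := fun p : α × ι => f p.2 p.1) hf).comp
    (measurable_id.prodMk hg)

lemma Measurable.clearingAlloc {α : Type*} [MeasurableSpace α] {S p : α → ℝ}
    (hS : Measurable S) (hp : Measurable p) (k j : ℕ) (b : ℝ) :
    Measurable fun x => clearingAlloc k j b (S x) (p x) := by
  unfold _root_.clearingAlloc
  refine Measurable.ite (measurableSet_lt hp hS) ?_ ?_ <;> split_ifs
  all_goals first
    | exact measurable_const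
    | exact measurable_const.div hS
    | exact measurable_const.div hp
    | exact measurable_const.sub (hS.div hp)

section Measurability

variable {n : ℕ}

lemma measurableSet_outranks (a b : Fin n) : MeasurableSet {w : Fin n → ℝ | Outranks w a b} :=
  (measurableSet_lt (measurable_pi_apply b) (measurable_pi_apply a)).union
    ((measurableSet_eq_fun (measurable_pi_apply a) (measurable_pi_apply b)).inter
      (MeasurableSet.const _))

lemma measurable_valueRank (b : Fin n) : Measurable fun w : Fin n → ℝ => valueRank w b := by
  classical
  simp_rw [valueRank_eq_card, card_filter]
  exact Finset.measurable_sum _ fun c _ =>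
    Measurable.ite (measurableSet_outranks c b) measurable_const measurable_const

lemma measurable_sortPerm_apply (m : Fin n) : Measurable fun w : Fin n → ℝ => sortPerm w m := by
  refine measurable_to_countable' fun b => ?_
  have hfiber : (fun w : Fin n → ℝ => sortPerm w m) ⁻¹' {b}
      = (fun w => valueRank w b) ⁻¹' {(m : ℕ)} := by
    ext w
    change _ = b ↔ ((sortPerm w).symm b : ℕ) = m
    rw [Fin.val_inj, Equiv.symm_apply_eq, eq_comm]
  rw [hfiber]
  exact measurable_valueRank b (measurableSet_singleton _)

lemma measurable_sortedVal (j : ℕ) : Measurable fun w : Fin n → ℝ => sortedVal w j := by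
  by_cases hj : j < n
  · simp only [sortedVal, dif_pos hj]
    exact (measurable_sortPerm_apply _).countable_piecewise (f := fun b w => w b)
      measurable_pi_apply
  · simp only [sortedVal, dif_neg hj]
    exact measurable_const

lemma measurable_sortedBud (B : Fin n → ℝ) (j : ℕ) :
    Measurable fun w : Fin n → ℝ => sortedBud w B j := by
  by_cases hj : j < n
  · simp only [sortedBud, dif_pos hj]
    exact (measurable_of_finite B).comp (measurable_sortPerm_apply _)
  · simp only [sortedBud, dif_neg hj]
    exact measurable_const

lemma measurable_kstar (B : Fin n → ℝ) : Measurable fun w : Fin n → ℝ => kstar w B :=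
  measurable_findGreatest fun _ _ => measurableSet_le
    (Finset.measurable_sum _ fun j _ => measurable_sortedBud B j) (measurable_sortedVal _)

lemma measurable_UPA (B : Fin n → ℝ) (i : Fin n) : Measurable fun w : Fin n → ℝ => UPA w B i := by
  simp_rw [UPA_eq_clearingAlloc, winnersBudget]
  exact ((measurable_kstar B).prodMk (measurable_valueRank i)).countable_piecewise
    (f := fun kj w => clearingAlloc kj.1 kj.2 (B i) (∑ t ∈ range kj.1, sortedBud w B t)
      (sortedVal w kj.1))
    fun kj => .clearingAlloc (Finset.measurable_sum _ fun t _ => measurable_sortedBud B t)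
      (measurable_sortedVal _) _ _ _

lemma intervalIntegrable_UPA_update {B : Fin n → ℝ} (hB : ∀ a, 0 ≤ B a) (v : Fin n → ℝ)
    (i : Fin n) (a b : ℝ) :
    IntervalIntegrable (fun u => UPA (Function.update v i u) B i) volume a b := by
  refine (intervalIntegrable_const (c := (1 : ℝ))).mono_fun'
    ((measurable_UPA B i).comp (measurable_update v)).aestronglyMeasurable
    (ae_of_all _ fun u => ?_)
  obtain ⟨h0, h1⟩ := UPA_mem_Icc (Function.update v i u) hB i
  show ‖UPA _ B i‖ ≤ 1
  rwa [Real.norm_eq_abs, abs_of_nonneg h0]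

end Measurability

lemma mul_sub_integral_le_of_eqOn {f : ℝ → ℝ} {a p c : ℝ} (hp : 0 ≤ p) (hpa : p ≤ a)
    (hf₀ : ∀ u ∈ Set.Icc 0 p, 0 ≤ f u) (h₁ : IntervalIntegrable f volume 0 p)
    (h₂ : IntervalIntegrable f volume p a) (hc : Set.EqOn f (fun _ => c) (Set.Ioc p a)) :
    a * c - ∫ u in 0..a, f u ≤ p * c := by
  have htail : ∫ u in p..a, f u = (a - p) * c := by
    rw [intervalIntegral.integral_of_le hpa, setIntegral_congr_fun measurableSet_Ioc hc,
      setIntegral_const, Real.volume_real_Ioc_of_le hpa, smul_eq_mul]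
  rw [← intervalIntegral.integral_add_adjacent_intervals h₁ h₂, htail]
  linear_combination intervalIntegral.integral_nonneg (μ := volume) hp hf₀

/-- the Myerson payments of the Uniform Price Auction respect
budgets: `π_i = v_i·x_i(v) − ∫_0^{v_i} x_i(u, v_{−i}) du ≤ B_i`. -/
theorem stmt7 {n : ℕ} (v B : Fin n → ℝ)
    (hv : ∀ i, 0 < v i) (hB : ∀ i, 0 < B i) (i : Fin n) :
    v i * UPA v B i -
      (∫ u in (0:ℝ)..(v i), UPA (Function.update v i u) B i) ≤ B i := by
  have hB₀ : ∀ a, 0 ≤ B a := fun a => (hB a).le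
  have hI := intervalIntegrable_UPA_update hB₀ v i
  rcases lt_or_ge (valueRank v i) (kstar v B) with hwin | hlose
  · have hp := clearingPrice_pos hB hwin
    calc _ ≤ clearingPrice v B * UPA v B i :=
          mul_sub_integral_le_of_eqOn hp.le (clearingPrice_le (fun a => (hv a).le) hwin)
            (fun u _ => (UPA_mem_Icc _ hB₀ i).1) (hI _ _) (hI _ _) fun u hu =>
            UPA_update_eq_of_clearingPrice_lt (fun a => (hv a).le) hwin hu.1
      _ = B i := by rw [UPA_eq_div_clearingPrice hwin, mul_div_cancel₀ _ hp.ne']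
  · have hpay : 0 ≤ ∫ u in (0:ℝ)..(v i), UPA (Function.update v i u) B i :=
      intervalIntegral.integral_nonneg (hv i).le fun u _ => (UPA_mem_Icc _ hB₀ i).1
    linarith [mul_UPA_le_of_kstar_le hv hB hlose]
end

section
/- For every instance (v, B), the liquid welfare of the Uniform Price Auction's allocation weakly dominates that of the Adaptive Clinching Auction: W̄(x^u) ≥ W̄(x^c). In particular, using the characterizations: (a) there exists k^c such that the clinching auction charges π^c_i = B_i for i ≤ k^c, x^c_i = 0 for i > k^c+1, and B_i ≤ v_{k^c+1}·x^c_i for i ≤ k^c; (b) the uniform price auction satisfies W̄(x^u) = Σ_{j≤k^u} B_j + v_{k^u+1}·x^u_{k^u+1} with v_{k^u+1}·x^u_{k^u+1} ≤ B_{k^u+1} and 1 ≤ Σ_{i≤k^u} B_i/v_{k^u+1} + x^u_{k^u+1}; then k^c ≤ k^u and W̄(x^c) ≤ W̄(x^u). -/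
/-!
Both welfares are controlled by partial budget sums. Every clinching bidder `i ≤ kᶜ` has
`Bᵢ ≤ v_{kᶜ+1} xᶜᵢ`, so summing over the goods clinched shows `∑_{i ≤ kᶜ} Bᵢ + v_{kᶜ+1} xᶜ_{kᶜ+1}`
is at most `v_{kᶜ+1}`; by the maximality of `kᵘ` this forces `kᶜ ≤ kᵘ`. If `kᶜ = kᵘ`, the clinching
welfare is at most `v_{kᵘ+1}`, which the uniform price welfare reaches by property (b); if `kᶜ < kᵘ`,
the clinching welfare is at most `∑_{i ≤ kᶜ+1} Bᵢ ≤ ∑_{i ≤ kᵘ} Bᵢ`, again below the uniform welfare.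
-/

open Finset

noncomputable section

def liquidWelfare (n : ℕ) (v B x : ℕ → ℝ) : ℝ :=
  ∑ i ∈ Icc 1 n, min (v i * x i) (B i)

theorem liquidWelfare_le_of_eq_zero {n k : ℕ} {v B x : ℕ → ℝ} (hk : k + 1 ≤ n)
    (hx : ∀ i, k + 1 < i → i ≤ n → x i = 0) :
    liquidWelfare n v B x ≤ ∑ i ∈ Icc 1 k, B i + min (v (k + 1) * x (k + 1)) (B (k + 1)) := by
  calc liquidWelfare n v B x ≤ ∑ i ∈ Icc 1 (k + 1), min (v i * x i) (B i) := by
        refine sum_le_sum_of_subset_of_nonpos' (Icc_subset_Icc le_rfl hk) fun i hi hik => ?_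
        have hi : k + 1 < i ∧ i ≤ n := by simp only [mem_Icc] at hi hik; omega
        rw [hx i hi.1 hi.2, mul_zero]
        exact min_le_left _ _
    _ = ∑ i ∈ Icc 1 k, min (v i * x i) (B i) + min (v (k + 1) * x (k + 1)) (B (k + 1)) :=
        sum_Icc_succ_top (by omega) _
    _ ≤ ∑ i ∈ Icc 1 k, B i + min (v (k + 1) * x (k + 1)) (B (k + 1)) := by
        gcongr with i
        exact min_le_right _ _

theorem sum_Icc_add_mul_le_of_le_mul {n k : ℕ} {B x : ℕ → ℝ} {c : ℝ} (hc : 0 ≤ c)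
    (hx : ∀ i, 0 ≤ x i) (hsum : ∑ i ∈ Icc 1 n, x i = 1) (hk : k + 1 ≤ n)
    (hB : ∀ i, 1 ≤ i → i ≤ k → B i ≤ c * x i) :
    ∑ i ∈ Icc 1 k, B i + c * x (k + 1) ≤ c := by
  calc ∑ i ∈ Icc 1 k, B i + c * x (k + 1) ≤ ∑ i ∈ Icc 1 k, c * x i + c * x (k + 1) := by
        gcongr with i hi
        exact hB i (mem_Icc.1 hi).1 (mem_Icc.1 hi).2
    _ = c * ∑ i ∈ Icc 1 (k + 1), x i := by
        rw [sum_Icc_succ_top (by omega), mul_add, mul_sum]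
    _ ≤ c * ∑ i ∈ Icc 1 n, x i := by
        gcongr
        exact fun i _ _ => hx i
    _ = c := by rw [hsum, mul_one]

theorem le_of_sum_Icc_le_of_forall_lt {n k m : ℕ} {v B : ℕ → ℝ}
    (hsort : ∀ i j, 1 ≤ i → i ≤ j → j ≤ n → v j ≤ v i)
    (hmax : ∀ l, m < l → l ≤ n → v l < ∑ j ∈ Icc 1 l, B j) (hk : k + 1 ≤ n)
    (h : ∑ j ∈ Icc 1 k, B j ≤ v (k + 1)) : k ≤ m := by
  by_contra! hmk
  have := hmax k hmk (by omega)
  have := hsort k (k + 1) (by omega) (by omega) hk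
  linarith

theorem le_sum_add_mul_of_one_le_sum_div_add {ι : Type*} (s : Finset ι) (B : ι → ℝ) {c x : ℝ}
    (hc : 0 < c) (h : 1 ≤ ∑ i ∈ s, B i / c + x) : c ≤ ∑ i ∈ s, B i + c * x := by
  rw [← sum_div] at h
  have := mul_le_mul_of_nonneg_left h hc.le
  rwa [mul_one, mul_add, mul_div_cancel₀ _ hc.ne'] at this

end

theorem stmt8_general (n : ℕ) (v B : ℕ → ℝ)
    (hv : ∀ i, 1 ≤ i → i ≤ n → 0 < v i) (hB : ∀ i, 1 ≤ i → i ≤ n → 0 < B i)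
    (hsort : ∀ i j, 1 ≤ i → i ≤ j → j ≤ n → v j ≤ v i)
    (hv0 : ∀ j, n < j → v j = 0)
    -- the Uniform Price Auction: threshold index and allocation
    (ku : ℕ) (hkun : ku ≤ n)
    (hkumax : ∀ m, ku < m → m ≤ n → v m < ∑ j ∈ Finset.Icc 1 m, B j)
    (xu : ℕ → ℝ) (hxunn : ∀ i, 0 ≤ xu i)
    -- properties (b) of the uniform price outcome
    (hWu : ∑ i ∈ Finset.Icc 1 n, min (v i * xu i) (B i) =
      (∑ j ∈ Finset.Icc 1 ku, B j) + v (ku+1) * xu (ku+1))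
    (hstar : 1 ≤ (∑ i ∈ Finset.Icc 1 ku, B i / v (ku+1)) + xu (ku+1))
    -- properties (a) of the clinching outcome
    (xc : ℕ → ℝ) (kc : ℕ) (hkcn : kc + 1 ≤ n)
    (hxcnn : ∀ i, 0 ≤ xc i) (hxcsum : ∑ i ∈ Finset.Icc 1 n, xc i = 1)
    (hxc0 : ∀ i, kc + 1 < i → i ≤ n → xc i = 0)
    (hBle : ∀ i, 1 ≤ i → i ≤ kc → B i ≤ v (kc+1) * xc i) :
    kc ≤ ku ∧
    ∑ i ∈ Finset.Icc 1 n, min (v i * xc i) (B i) ≤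
      ∑ i ∈ Finset.Icc 1 n, min (v i * xu i) (B i) := by
  have hvkc : 0 < v (kc + 1) := hv _ (by omega) hkcn
  have hclinch := sum_Icc_add_mul_le_of_le_mul hvkc.le hxcnn hxcsum hkcn hBle
  have hkc : kc ≤ ku := le_of_sum_Icc_le_of_forall_lt hsort hkumax hkcn
    (by nlinarith [hxcnn (kc + 1)])
  have hWc := liquidWelfare_le_of_eq_zero (v := v) (B := B) hkcn hxc0
  refine ⟨hkc, hWc.trans ?_⟩
  rcases hkc.eq_or_lt with rfl | hlt
  · calc _ ≤ v (kc + 1) := (add_le_add_right (min_le_left _ _) _).trans hclinch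
      _ ≤ _ := hWu ▸ le_sum_add_mul_of_one_le_sum_div_add _ _ hvkc hstar
  · have hvku : 0 ≤ v (ku + 1) := by
      rcases le_or_gt (ku + 1) n with h | h
      · exact (hv _ (by omega) h).le
      · exact (hv0 _ h).ge
    calc _ ≤ ∑ i ∈ Icc 1 (kc + 1), B i := by
          rw [sum_Icc_succ_top (by omega)]
          exact add_le_add_right (min_le_right _ _) _
      _ ≤ ∑ i ∈ Icc 1 ku, B i := sum_le_sum_of_subset_of_nonneg (Icc_subset_Icc le_rfl hlt)
          fun i hi _ => (hB i (mem_Icc.1 hi).1 ((mem_Icc.1 hi).2.trans hkun)).le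
      _ ≤ _ := hWu ▸ le_add_of_nonneg_right (mul_nonneg hvku (hxunn _))

/-- the liquid welfare of the Uniform Price Auction's allocation
weakly dominates that of the Adaptive Clinching Auction on every instance. -/
theorem stmt8 (n : ℕ) (v B : ℕ → ℝ)
    (hv : ∀ i, 1 ≤ i → i ≤ n → 0 < v i) (hB : ∀ i, 1 ≤ i → i ≤ n → 0 < B i)
    (hsort : ∀ i j, 1 ≤ i → i ≤ j → j ≤ n → v j ≤ v i)
    (hv0 : ∀ j, n < j → v j = 0)
    -- the Uniform Price Auction: threshold index and allocation
    (ku : ℕ) (hkun : ku ≤ n)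
    (hku : ku = 0 ∨ ∑ j ∈ Finset.Icc 1 ku, B j ≤ v ku)
    (hkumax : ∀ m, ku < m → m ≤ n → v m < ∑ j ∈ Finset.Icc 1 m, B j)
    (xu : ℕ → ℝ) (hxunn : ∀ i, 0 ≤ xu i)
    (hxuI : v (ku+1) < ∑ j ∈ Finset.Icc 1 ku, B j → ∀ i, 1 ≤ i → i ≤ n →
      xu i = if i ≤ ku then B i / ∑ j ∈ Finset.Icc 1 ku, B j else 0)
    (hxuII : ∑ j ∈ Finset.Icc 1 ku, B j ≤ v (ku+1) → ∀ i, 1 ≤ i → i ≤ n →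
      xu i = if i ≤ ku then B i / v (ku+1)
             else if i = ku+1 then 1 - (∑ j ∈ Finset.Icc 1 ku, B j) / v (ku+1)
             else 0)
    (hxusum : ∑ i ∈ Finset.Icc 1 n, xu i = 1)
    -- properties (b) of the uniform price outcome
    (hWu : ∑ i ∈ Finset.Icc 1 n, min (v i * xu i) (B i) =
      (∑ j ∈ Finset.Icc 1 ku, B j) + v (ku+1) * xu (ku+1))
    (hub : v (ku+1) * xu (ku+1) ≤ B (ku+1))
    (hstar : 1 ≤ (∑ i ∈ Finset.Icc 1 ku, B i / v (ku+1)) + xu (ku+1))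
    -- properties (a) of the clinching outcome
    (xc πc : ℕ → ℝ) (kc : ℕ) (hkcn : kc + 1 ≤ n)
    (hxcnn : ∀ i, 0 ≤ xc i) (hxcsum : ∑ i ∈ Finset.Icc 1 n, xc i = 1)
    (hπB : ∀ i, 1 ≤ i → i ≤ kc → πc i = B i)
    (hxc0 : ∀ i, kc + 1 < i → i ≤ n → xc i = 0)
    (hBle : ∀ i, 1 ≤ i → i ≤ kc → B i ≤ v (kc+1) * xc i) :
    kc ≤ ku ∧
    ∑ i ∈ Finset.Icc 1 n, min (v i * xc i) (B i) ≤
      ∑ i ∈ Finset.Icc 1 n, min (v i * xu i) (B i) :=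
  stmt8_general n v B hv hB hsort hv0 ku hkun hkumax xu hxunn hWu hstar xc kc hkcn hxcnn hxcsum hxc0
    hBle
end
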